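/- Let μ : [t₁, t₀) → ℝ be nonnegative and satisfy the Jacobi-volume equation (d²/dt²)(μ^{1/3}) + (1/3)(R(t) + 2σ(t)²) μ^{1/3} = 0 with R(t) ≥ 0 (timelike convergence). If μ vanishes at only finitely many points in some neighborhood of t₀, then lim_{t→t₀} μ(t) exists. -/
import Mathlib


/-- If `μ ≥ 0` on `[t₁, t₀)`, its cube root `u = μ^{1/3}` satisfies the Jacobi-volume
equation `u'' + (1/3)(R + 2σ²) u = 0` with `R ≥ 0` (timelike convergence), and `μ`
vanishes at only finitely many points in some neighborhood of `t₀`, then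
`lim_{t → t₀⁻} μ(t)` exists. -/
theorem jacobi_volume_form_has_limit (t₁ t₀ : ℝ) (ht : t₁ < t₀)
    (μ u v R σ : ℝ → ℝ)
    (hμnn : ∀ t ∈ Set.Ico t₁ t₀, 0 ≤ μ t)
    (hu : ∀ t ∈ Set.Ico t₁ t₀, u t = (μ t) ^ ((1 : ℝ) / 3))
    (hR : ∀ t ∈ Set.Ico t₁ t₀, 0 ≤ R t)
    (hu' : ∀ t ∈ Set.Ico t₁ t₀, HasDerivAt u (v t) t)
    (hu'' : ∀ t ∈ Set.Ico t₁ t₀,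
      HasDerivAt v (-(1 / 3) * (R t + 2 * (σ t) ^ 2) * u t) t)
    (hfin : ∃ a ∈ Set.Ico t₁ t₀, {t ∈ Set.Ico a t₀ | μ t = 0}.Finite) :
    ∃ L : ℝ, Filter.Tendsto μ (nhdsWithin t₀ (Set.Iio t₀)) (nhds L) := by
  have ht₁mem : t₁ ∈ Set.Ico t₁ t₀ := ⟨le_refl _, ht⟩
  -- u ≥ 0 on the interval
  have hunn : ∀ t ∈ Set.Ico t₁ t₀, 0 ≤ u t := by
    intro t htm
    rw [hu t htm]
    exact Real.rpow_nonneg (hμnn t htm) _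
  have hint : interior (Set.Ico t₁ t₀) = Set.Ioo t₁ t₀ := interior_Ico
  have hIoosub : Set.Ioo t₁ t₀ ⊆ Set.Ico t₁ t₀ := Set.Ioo_subset_Ico_self
  -- v is antitone on [t₁, t₀)
  have hvcont : ContinuousOn v (Set.Ico t₁ t₀) := fun t htm =>
    ((hu'' t htm).continuousAt).continuousWithinAt
  have hvanti : AntitoneOn v (Set.Ico t₁ t₀) := by
    apply antitoneOn_of_deriv_nonpos (convex_Ico t₁ t₀) hvcont
    · intro x hx
      rw [hint] at hx
      exact ((hu'' x (hIoosub hx)).differentiableAt).differentiableWithinAt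
    · intro x hx
      rw [hint] at hx
      rw [(hu'' x (hIoosub hx)).deriv]
      have h1 := hR x (hIoosub hx)
      have h2 := hunn x (hIoosub hx)
      have h3 : (0:ℝ) ≤ (σ x) ^ 2 := sq_nonneg _
      nlinarith
  have hucont : ContinuousOn u (Set.Ico t₁ t₀) := fun t htm =>
    ((hu' t htm).continuousAt).continuousWithinAt
  -- u has a (finite) limit at t₀⁻
  have hulim : ∃ Lu : ℝ, Filter.Tendsto u (nhdsWithin t₀ (Set.Iio t₀)) (nhds Lu) := by
    by_cases hcase : ∀ t ∈ Set.Ico t₁ t₀, 0 ≤ v t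
    · -- u is monotone and bounded above by the tangent line at t₁
      have hmono : MonotoneOn u (Set.Ico t₁ t₀) := by
        apply monotoneOn_of_deriv_nonneg (convex_Ico t₁ t₀) hucont
        · intro x hx
          rw [hint] at hx
          exact ((hu' x (hIoosub hx)).differentiableAt).differentiableWithinAt
        · intro x hx
          rw [hint] at hx
          rw [(hu' x (hIoosub hx)).deriv]
          exact hcase x (hIoosub hx)
      -- tangent line bound: u t ≤ u t₁ + v t₁ * (t - t₁)
      set w : ℝ → ℝ := fun t => u t₁ + v t₁ * (t - t₁) - u t with hw
      have hwmono : MonotoneOn w (Set.Ico t₁ t₀) := by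
        apply monotoneOn_of_deriv_nonneg (convex_Ico t₁ t₀)
        · apply ContinuousOn.sub _ hucont
          fun_prop
        · intro x hx
          rw [hint] at hx
          have : HasDerivAt w (v t₁ - v x) x := by
            have hL : HasDerivAt (fun t => u t₁ + v t₁ * (t - t₁)) (v t₁) x := by
              have : HasDerivAt (fun t : ℝ => t - t₁) 1 x :=
                (hasDerivAt_id x).sub_const t₁
              simpa using ((this.const_mul (v t₁)).const_add (u t₁))
            exact hL.sub (hu' x (hIoosub hx))
          exact this.differentiableAt.differentiableWithinAt
        · intro x hx
          rw [hint] at hx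
          have hxI := hIoosub hx
          have hdw : HasDerivAt w (v t₁ - v x) x := by
            have hL : HasDerivAt (fun t => u t₁ + v t₁ * (t - t₁)) (v t₁) x := by
              have : HasDerivAt (fun t : ℝ => t - t₁) 1 x :=
                (hasDerivAt_id x).sub_const t₁
              simpa using ((this.const_mul (v t₁)).const_add (u t₁))
            exact hL.sub (hu' x hxI)
          rw [hdw.deriv]
          have := hvanti ht₁mem hxI hx.1.le
          linarith
      have hbound : ∀ t ∈ Set.Ico t₁ t₀, u t ≤ u t₁ + v t₁ * (t₀ - t₁) := by
        intro t htm
        have h0 : w t₁ ≤ w t := hwmono ht₁mem htm htm.1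
        have hwt₁ : w t₁ = 0 := by simp [hw]
        have hv1 : 0 ≤ v t₁ := hcase t₁ ht₁mem
        have : v t₁ * (t - t₁) ≤ v t₁ * (t₀ - t₁) := by
          apply mul_le_mul_of_nonneg_left _ hv1
          linarith [htm.2]
        simp only [hw] at h0
        linarith [h0]
      have hne : (Set.Ioo t₁ t₀).Nonempty := Set.nonempty_Ioo.2 ht
      have hbdd : BddAbove (u '' Set.Ioo t₁ t₀) := by
        refine ⟨u t₁ + v t₁ * (t₀ - t₁), ?_⟩
        rintro y ⟨x, hx, rfl⟩
        exact hbound x (hIoosub hx)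
      exact ⟨_, (hmono.mono hIoosub).tendsto_nhdsWithin_Ioo_left hne hbdd⟩
    · -- v goes negative at some c; afterwards u is antitone, bounded below by 0
      push_neg at hcase
      obtain ⟨c, hcI, hvc⟩ := hcase
      have hanti : AntitoneOn u (Set.Ico c t₀) := by
        apply antitoneOn_of_deriv_nonpos (convex_Ico c t₀)
        · exact hucont.mono (Set.Ico_subset_Ico_left hcI.1)
        · intro x hx
          rw [interior_Ico] at hx
          have hxI : x ∈ Set.Ico t₁ t₀ := ⟨hcI.1.trans hx.1.le, hx.2⟩
          exact ((hu' x hxI).differentiableAt).differentiableWithinAt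
        · intro x hx
          rw [interior_Ico] at hx
          have hxI : x ∈ Set.Ico t₁ t₀ := ⟨hcI.1.trans hx.1.le, hx.2⟩
          rw [(hu' x hxI).deriv]
          have := hvanti hcI hxI hx.1.le
          linarith
      have hne : (Set.Ioo c t₀).Nonempty := Set.nonempty_Ioo.2 hcI.2
      have hbdd : BddBelow (u '' Set.Ioo c t₀) := by
        refine ⟨0, ?_⟩
        rintro y ⟨x, hx, rfl⟩
        exact hunn x ⟨hcI.1.trans hx.1.le, hx.2⟩
      exact ⟨_, (hanti.mono Set.Ioo_subset_Ico_self).tendsto_nhdsWithin_Ioo_left hne hbdd⟩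
  obtain ⟨Lu, hLu⟩ := hulim
  refine ⟨Lu ^ 3, ?_⟩
  have heq : μ =ᶠ[nhdsWithin t₀ (Set.Iio t₀)] fun t => u t ^ 3 := by
    filter_upwards [Filter.mem_of_superset (Ioo_mem_nhdsLT ht)
      Set.Ioo_subset_Ico_self] with t htm
    rw [hu t htm]
    rw [← Real.rpow_natCast (μ t ^ ((1:ℝ)/3)) 3, ← Real.rpow_mul (hμnn t htm)]
    norm_num
  exact Filter.Tendsto.congr' heq.symm (hLu.pow 3)
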